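/- Let A ∈ ℝ^{K×d}, Γ ∈ ℝ^{K×K} symmetric positive definite, y ∈ ℝ^K, and let x^{(1)},…,x^{(J)} ∈ ℝ^d be an ensemble with mean x̄, empirical covariance C(x) = (1/J)∑_j (x^{(j)} − x̄)(x^{(j)} − x̄)ᵀ, and empirical cross-covariance C^{x,G}(x) = (1/J)∑_j (x^{(j)} − x̄)(Ax^{(j)} − Ax̄)ᵀ for the linear forward map G(x) = Ax. Then C^{x,G}(x) = C(x)Aᵀ, and consequently, for each j, C^{x,G}(x)Γ⁻¹(y − Ax^{(j)}) = −C(x)∇Φ(x^{(j)}), where Φ(x) = ½(Ax − y)ᵀΓ⁻¹(Ax − y); i.e., for linear forward maps the deterministic EKI dynamics dx^{(j)}/dt = C^{x,G}(x)Γ⁻¹(y − Ax^{(j)}) coincide with the covariance-preconditioned gradient flow dx^{(j)}/dt = −C(x)∇Φ(x^{(j)}). -/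

import Mathlib

open Matrix MeasureTheory RealInnerProductSpace Filter

noncomputable section

/-- Matrix–vector multiplication, viewed as a map on Euclidean spaces. -/
def mulVecE {m n : ℕ} (M : Matrix (Fin m) (Fin n) ℝ) (v : EuclideanSpace ℝ (Fin n)) :
    EuclideanSpace ℝ (Fin m) :=
  WithLp.toLp 2 (fun i => ∑ j, M i j * v j)

/-- Ensemble mean `x̄ = (1/J) ∑ⱼ x⁽ʲ⁾`. -/
def emean {d J : ℕ} (x : Fin J → EuclideanSpace ℝ (Fin d)) : EuclideanSpace ℝ (Fin d) :=
  (J : ℝ)⁻¹ • ∑ j, x j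

/-- Empirical covariance `C(x) = (1/J) ∑ⱼ (x⁽ʲ⁾ - x̄)(x⁽ʲ⁾ - x̄)ᵀ`. -/
def ecov {d J : ℕ} (x : Fin J → EuclideanSpace ℝ (Fin d)) : Matrix (Fin d) (Fin d) ℝ :=
  (J : ℝ)⁻¹ • ∑ j, vecMulVec (fun i => (x j - emean x) i) (fun i => (x j - emean x) i)

/-- Convex subdifferential `∂R(x) = {ξ | ∀ z, R z ≥ R x + ⟪ξ, z - x⟫}`. -/
def subderiv {d : ℕ} (R : EuclideanSpace ℝ (Fin d) → ℝ) (x : EuclideanSpace ℝ (Fin d)) :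
    Set (EuclideanSpace ℝ (Fin d)) :=
  {ξ | ∀ z, R x + ⟪ξ, z - x⟫ ≤ R z}

/-- Squared weighted norm `‖v‖_C² = vᵀ C⁻¹ v`. -/
def wnormSq {d : ℕ} (C : Matrix (Fin d) (Fin d) ℝ) (v : EuclideanSpace ℝ (Fin d)) : ℝ :=
  ⟪v, mulVecE C⁻¹ v⟫

/-- Smallest eigenvalue of a symmetric matrix, via the Rayleigh quotient. -/
def lamMin {d : ℕ} (C : Matrix (Fin d) (Fin d) ℝ) : ℝ :=
  ⨅ v : {v : EuclideanSpace ℝ (Fin d) // ‖v‖ = 1}, ⟪mulVecE C v.1, v.1⟫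

/-- Largest eigenvalue of a symmetric matrix, via the Rayleigh quotient. -/
def lamMax {d : ℕ} (C : Matrix (Fin d) (Fin d) ℝ) : ℝ :=
  ⨆ v : {v : EuclideanSpace ℝ (Fin d) // ‖v‖ = 1}, ⟪mulVecE C v.1, v.1⟫

end

/-! For a linear forward map, `A x⁽ʲ⁾ - A x̄ = A (x⁽ʲ⁾ - x̄)`, so every outer product in the
cross-covariance is the corresponding outer product of the covariance times `Aᵀ`. The symmetry of
`Γ⁻¹` makes `AᵀΓ⁻¹(Ax - y)` the gradient of `Φ`, and the EKI drift
`C Aᵀ Γ⁻¹ (y - A x⁽ʲ⁾)` becomes `-C ∇Φ(x⁽ʲ⁾)`. -/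

open InnerProductSpace

theorem vecMulVec_mulVec_right {α l m n : Type*} [CommSemiring α] [Fintype n] (u : l → α)
    (A : Matrix m n α) (v : n → α) : vecMulVec u (A *ᵥ v) = vecMulVec u v * Aᵀ := by
  rw [vecMulVec_mul, vecMul_transpose]

section Gradient

variable {E : Type*} [NormedAddCommGroup E] [InnerProductSpace ℝ E] [CompleteSpace E]

theorem hasGradientAt_half_inner_self_apply (T : E →L[ℝ] E) (hT : (T : E →ₗ[ℝ] E).IsSymmetric)
    (r : E) : HasGradientAt (fun r => 1 / 2 * ⟪r, T r⟫) (T r) r := by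
  rw [hasGradientAt_iff_hasFDerivAt]
  refine (((hasFDerivAt_id r).inner ℝ T.hasFDerivAt).const_mul (1 / 2 : ℝ)).congr_fderiv ?_
  refine ContinuousLinearMap.ext fun v => ?_
  simp only [one_div, id_eq, _root_.smul_apply, ContinuousLinearMap.comp_apply,
    ContinuousLinearMap.prod_apply, ContinuousLinearMap.id_apply, fderivInnerCLM_apply, smul_eq_mul,
    toDual_apply_apply]
  rw [← ContinuousLinearMap.coe_coe T, ← hT r v, real_inner_comm v]
  ring

end Gradient

section MulVecE

variable {m n p : ℕ}

lemma mulVecE_eq_toEuclideanLin (M : Matrix (Fin m) (Fin n) ℝ) (v : EuclideanSpace ℝ (Fin n)) :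
    mulVecE M v = toEuclideanLin M v :=
  rfl

lemma mulVecE_mul (M : Matrix (Fin m) (Fin n) ℝ) (N : Matrix (Fin n) (Fin p) ℝ)
    (v : EuclideanSpace ℝ (Fin p)) :
    mulVecE (M * N) v = mulVecE M (mulVecE N v) := by
  rw [mulVecE_eq_toEuclideanLin, toLpLin_mul_same]
  rfl

lemma mulVecE_sub (M : Matrix (Fin m) (Fin n) ℝ) (u v : EuclideanSpace ℝ (Fin n)) :
    mulVecE M (u - v) = mulVecE M u - mulVecE M v := by
  simp only [mulVecE_eq_toEuclideanLin, map_sub]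

lemma mulVecE_neg (M : Matrix (Fin m) (Fin n) ℝ) (v : EuclideanSpace ℝ (Fin n)) :
    mulVecE M (-v) = -mulVecE M v := by
  simp only [mulVecE_eq_toEuclideanLin, map_neg]

lemma inner_mulVecE_left (M : Matrix (Fin m) (Fin n) ℝ)
    (u : EuclideanSpace ℝ (Fin n)) (v : EuclideanSpace ℝ (Fin m)) :
    ⟪mulVecE M u, v⟫ = ⟪u, mulVecE Mᵀ v⟫ := by
  rw [mulVecE_eq_toEuclideanLin, mulVecE_eq_toEuclideanLin, ← conjTranspose_eq_transpose_of_trivial,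
    toEuclideanLin_conjTranspose_eq_adjoint, LinearMap.adjoint_inner_right]

theorem HasGradientAt.comp_mulVecE_sub {f : EuclideanSpace ℝ (Fin m) → ℝ}
    {g : EuclideanSpace ℝ (Fin m)} (A : Matrix (Fin m) (Fin n) ℝ) (y : EuclideanSpace ℝ (Fin m))
    {z : EuclideanSpace ℝ (Fin n)} (hf : HasGradientAt f g (mulVecE A z - y)) :
    HasGradientAt (fun z => f (mulVecE A z - y)) (mulVecE Aᵀ g) z := by
  rw [hasGradientAt_iff_hasFDerivAt] at hf ⊢
  have hA : HasFDerivAt (fun z => mulVecE A z - y)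
      (LinearMap.toContinuousLinearMap (toEuclideanLin A)) z :=
    (LinearMap.toContinuousLinearMap (toEuclideanLin A)).hasFDerivAt.sub_const y
  refine (hf.comp z hA).congr_fderiv (ContinuousLinearMap.ext fun v => ?_)
  simp only [ContinuousLinearMap.comp_apply, LinearMap.coe_toContinuousLinearMap',
    toDual_apply_apply, real_inner_comm, ← inner_mulVecE_left, ← mulVecE_eq_toEuclideanLin]

theorem ecov_mul_transpose {J : ℕ} (x : Fin J → EuclideanSpace ℝ (Fin n))
    (A : Matrix (Fin m) (Fin n) ℝ) :
    ecov x * Aᵀ = (J : ℝ)⁻¹ • ∑ j, vecMulVec (fun i => (x j - emean x) i)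
        (fun i => (mulVecE A (x j) - mulVecE A (emean x)) i) := by
  simp only [ecov, Matrix.smul_mul, Matrix.sum_mul, ← mulVecE_sub, ← vecMulVec_mulVec_right]
  rfl

end MulVecE

/-- for a linear forward map `G(x) = Ax` the cross-covariance satisfies
`C^{x,G} = C(x)Aᵀ`, and the deterministic EKI dynamics coincide with the
covariance-preconditioned gradient flow for `Φ(x) = ½(Ax-y)ᵀΓ⁻¹(Ax-y)`. -/
theorem stmt16 {d K J : ℕ} (A : Matrix (Fin K) (Fin d) ℝ) (Γ : Matrix (Fin K) (Fin K) ℝ)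
    (hΓ : Γ.PosDef) (y : EuclideanSpace ℝ (Fin K))
    (x : Fin J → EuclideanSpace ℝ (Fin d))
    (Cxg : Matrix (Fin d) (Fin K) ℝ)
    (hCxg : Cxg = (J : ℝ)⁻¹ • ∑ j, vecMulVec (fun i => (x j - emean x) i)
        (fun i => (mulVecE A (x j) - mulVecE A (emean x)) i))
    (Phi : EuclideanSpace ℝ (Fin d) → ℝ)
    (hPhi : ∀ z, Phi z = (1 / 2) * ⟪mulVecE A z - y, mulVecE Γ⁻¹ (mulVecE A z - y)⟫)
    (gradPhi : EuclideanSpace ℝ (Fin d) → EuclideanSpace ℝ (Fin d))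
    (hgrad : ∀ z, gradPhi z = mulVecE (Aᵀ * Γ⁻¹) (mulVecE A z - y)) :
    Cxg = ecov x * Aᵀ ∧
      (∀ z, HasGradientAt Phi (gradPhi z) z) ∧
      ∀ j, mulVecE (Cxg * Γ⁻¹) (y - mulVecE A (x j)) =
        -mulVecE (ecov x) (gradPhi (x j)) := by
  have hcross : Cxg = ecov x * Aᵀ := hCxg.trans (ecov_mul_transpose x A).symm
  refine ⟨hcross, fun z => ?_, fun j => ?_⟩
  · have hΓinv : (toEuclideanLin Γ⁻¹).IsSymmetric := isSymmetric_toEuclideanLin_iff.2 hΓ.1.inv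
    rw [funext hPhi, hgrad, mulVecE_mul]
    exact (hasGradientAt_half_inner_self_apply (LinearMap.toContinuousLinearMap
      (toEuclideanLin Γ⁻¹)) hΓinv _).comp_mulVecE_sub A y
  · rw [hcross, hgrad, Matrix.mul_assoc, mulVecE_mul, ← neg_sub, mulVecE_neg, mulVecE_neg]
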